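/- Let k be a field of characteristic zero, G an abelian group, and (R,Δ) a commutative G-graded differential k-algebra such that R is a graded field. Then contraction Q ↦ Q ∩ Z_Δ(R) and extension P ↦ RP are mutually inverse homeomorphisms between Δ-spec R and spec Z_Δ(R) (each equipped with its Zariski topology). Moreover, if R is a finitely generated (affine) k-algebra, contraction and extension also restrict to mutually inverse homeomorphisms between Δ-prim R and max Z_Δ(R). -/

import Mathlib

section Defs

variable {k R : Type*} [CommRing k] [CommRing R] [Algebra k R]

/-- An ideal stable under all derivations in `Δ`. -/
def IsDeltaIdeal (Δ : Set (Derivation k R R)) (I : Ideal R) : Prop :=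
  ∀ δ ∈ Δ, ∀ x ∈ I, δ x ∈ I

/-- The `Δ`-core of an ideal `J`: the largest `Δ`-stable ideal contained in `J`. -/
def deltaCore (Δ : Set (Derivation k R R)) (J : Ideal R) : Ideal R :=
  sSup {I : Ideal R | IsDeltaIdeal Δ I ∧ I ≤ J}

/-- A `Δ`-prime ideal: a proper `Δ`-ideal `Q` such that whenever a product of two
`Δ`-ideals lies in `Q`, one of them lies in `Q`. -/
def IsDeltaPrime (Δ : Set (Derivation k R R)) (Q : Ideal R) : Prop :=
  Q ≠ ⊤ ∧ IsDeltaIdeal Δ Q ∧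
    ∀ I J : Ideal R, IsDeltaIdeal Δ I → IsDeltaIdeal Δ J → I * J ≤ Q → I ≤ Q ∨ J ≤ Q

/-- A `Δ`-primitive ideal: the `Δ`-core of a maximal ideal. -/
def IsDeltaPrimitive (Δ : Set (Derivation k R R)) (P : Ideal R) : Prop :=
  ∃ M : Ideal R, M.IsMaximal ∧ deltaCore Δ M = P

end Defs

/-- The `Δ`-center of `R`: elements annihilated by every derivation in `Δ`. -/
def deltaCenter {k R : Type*} [CommRing k] [CommRing R] [Algebra k R]
    (Δ : Set (Derivation k R R)) : Subalgebra k R where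
  carrier := {r : R | ∀ δ ∈ Δ, δ r = 0}
  mul_mem' := by
    intro a b ha hb δ hδ
    rw [Derivation.leibniz, ha δ hδ, hb δ hδ, smul_zero, smul_zero, add_zero]
  add_mem' := by
    intro a b ha hb δ hδ
    rw [map_add, ha δ hδ, hb δ hδ, add_zero]
  algebraMap_mem' := by
    intro c δ hδ
    simp

/-- The homogeneous `k`-derivations of degree `d` with respect to a grading `𝒜`:
those `δ` with `δ(R_g) ⊆ R_{g+d}` for all `g`. -/
def homogeneousDerivations {k R G : Type*} [CommRing k] [CommRing R] [Algebra k R]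
    [AddCommGroup G] (𝒜 : G → Submodule k R) (d : G) :
    Submodule k (Derivation k R R) where
  carrier := {δ : Derivation k R R | ∀ g : G, ∀ x ∈ 𝒜 g, δ x ∈ 𝒜 (g + d)}
  add_mem' := by
    intro a b ha hb g x hx
    rw [Derivation.add_apply]
    exact Submodule.add_mem _ (ha g x hx) (hb g x hx)
  zero_mem' := by
    intro g x hx
    simp
  smul_mem' := by
    intro c δ hδ g x hx
    rw [Derivation.smul_apply]
    exact Submodule.smul_mem _ c (hδ g x hx)

/-- `R` is a graded field with respect to `𝒜`: a domain in which every nonzero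
homogeneous element is invertible. -/
def IsGradedField {k R G : Type*} [CommRing k] [CommRing R] [Algebra k R]
    (𝒜 : G → Submodule k R) : Prop :=
  IsDomain R ∧ ∀ (g : G) (x : R), x ∈ 𝒜 g → x ≠ 0 → IsUnit x


/-!
Every Δ-ideal `I` of the graded field `R` is generated by its Δ-constants `I ∩ Z`, where
`Z = Z_Δ(R)`: an element of `I` can be rescaled by a homogeneous unit so that its degree-zero
component is `1`, and then a homogeneous derivation in `Δ` either kills it or produces elements of
`I` with smaller homogeneous support. Conversely, `Z` is a homogeneous subalgebra in which every
nonzero homogeneous element is invertible, so a linear retraction of `R` onto the field `Z ∩ R₀`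
spreads degree by degree to a `Z`-linear retraction `R → Z`; hence `RP ∩ Z = P` for every ideal
`P` of `Z`. Contraction and extension are therefore inverse order isomorphisms between Δ-ideals
of `R` and ideals of `Z`, and they match Δ-primes with primes, Zariski-closed sets with
Zariski-closed sets and, by Zariski's lemma in the affine case, Δ-primitive ideals with maximal
ideals.
-/

open DirectSum

section DeltaIdeal

variable {k R : Type*} [CommRing k] [CommRing R] [Algebra k R] {Δ : Set (Derivation k R R)}

theorem isDeltaIdeal_span_of_subset_deltaCenter {s : Set R} (hs : s ⊆ deltaCenter Δ) :
    IsDeltaIdeal Δ (Ideal.span s) := by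
  intro δ hδ x hx
  induction hx using Submodule.span_induction with
  | mem y hy => simp [hs hy δ hδ]
  | zero => simp
  | add y z _ _ hy hz => simpa using add_mem hy hz
  | smul a y hy hy' =>
    rw [smul_eq_mul, Derivation.leibniz, smul_eq_mul, smul_eq_mul]
    exact add_mem (Ideal.mul_mem_left _ _ hy') (Ideal.mul_mem_right _ _ hy)

theorem isDeltaIdeal_sInf {S : Set (Ideal R)} (hS : ∀ I ∈ S, IsDeltaIdeal Δ I) :
    IsDeltaIdeal Δ (sInf S) := fun δ hδ x hx =>
  Ideal.mem_sInf.2 fun I hI => hS I hI δ hδ x (Ideal.mem_sInf.1 hx hI)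

theorem isDeltaIdeal_sSup {S : Set (Ideal R)} (hS : ∀ I ∈ S, IsDeltaIdeal Δ I) :
    IsDeltaIdeal Δ (sSup S) := by
  intro δ hδ x hx
  rw [sSup_eq_iSup'] at hx
  exact Submodule.iSup_induction _ (motive := fun x => δ x ∈ sSup S) hx
    (fun I y hy => Submodule.mem_sSup_of_mem I.2 (hS I I.2 δ hδ y hy)) (by simp)
    (fun y z hy hz => by simpa using add_mem hy hz)

theorem isDeltaIdeal_deltaCore (J : Ideal R) : IsDeltaIdeal Δ (deltaCore Δ J) :=
  isDeltaIdeal_sSup fun _ hI => hI.1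

theorem deltaCore_le (J : Ideal R) : deltaCore Δ J ≤ J :=
  sSup_le fun _ hI => hI.2

theorem le_deltaCore {I J : Ideal R} (hI : IsDeltaIdeal Δ I) (hIJ : I ≤ J) :
    I ≤ deltaCore Δ J :=
  le_sSup ⟨hI, hIJ⟩

theorem mem_deltaCenter_of_mul_eq_one {z w : R} (hz : z ∈ deltaCenter Δ) (hzw : z * w = 1) :
    w ∈ deltaCenter Δ := by
  intro δ hδ
  have h := congrArg δ hzw
  rw [Derivation.leibniz, hz δ hδ, smul_zero, add_zero, smul_eq_mul,
    Derivation.map_one_eq_zero] at h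
  calc δ w = w * (z * δ w) := by rw [← mul_assoc, mul_comm w z, hzw, one_mul]
    _ = 0 := by rw [h, mul_zero]

theorem isDeltaIdeal_map_deltaCenter (P : Ideal (deltaCenter Δ)) :
    IsDeltaIdeal Δ (P.map (algebraMap (deltaCenter Δ) R)) :=
  isDeltaIdeal_span_of_subset_deltaCenter (by rintro _ ⟨z, _, rfl⟩; exact z.2)

theorem isPrime_comap_of_isDeltaPrime {Q : Ideal R} (hQ : IsDeltaPrime Δ Q) :
    (Q.comap (algebraMap (deltaCenter Δ) R)).IsPrime := by
  refine ⟨fun h => hQ.1 (Ideal.comap_eq_top_iff.1 h), fun {a b} hab => ?_⟩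
  have hspan (z : deltaCenter Δ) : IsDeltaIdeal Δ (Ideal.span {(z : R)}) :=
    isDeltaIdeal_span_of_subset_deltaCenter (Set.singleton_subset_iff.2 z.2)
  have hmul : Ideal.span {(a : R)} * Ideal.span {(b : R)} ≤ Q := by
    rw [Ideal.span_singleton_mul_span_singleton, Ideal.span_singleton_le_iff_mem]
    exact hab
  simpa [Ideal.span_singleton_le_iff_mem] using hQ.2.2 _ _ (hspan a) (hspan b) hmul

theorem comap_deltaCore (M : Ideal R) :
    (deltaCore Δ M).comap (algebraMap (deltaCenter Δ) R) =
      M.comap (algebraMap (deltaCenter Δ) R) := by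
  refine le_antisymm (Ideal.comap_mono (deltaCore_le M)) fun z hz => ?_
  have hle := le_deltaCore (isDeltaIdeal_span_of_subset_deltaCenter (Δ := Δ)
    (Set.singleton_subset_iff.2 z.2)) ((Ideal.span_singleton_le_iff_mem M).2 hz)
  exact hle (Ideal.mem_span_singleton_self _)

end DeltaIdeal

theorem Ideal.comap_map_eq_self_of_retraction {A B : Type*} [CommRing A] [CommRing B]
    [Algebra A B] (ρ : B →ₗ[A] A) (hρ : ∀ a, ρ (algebraMap A B a) = a) (P : Ideal A) :
    (P.map (algebraMap A B)).comap (algebraMap A B) = P := by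
  refine le_antisymm (fun a ha => ?_) Ideal.le_comap_map
  suffices h : ∀ y ∈ P.map (algebraMap A B), ∀ b : B, ρ (b * y) ∈ P by
    simpa [hρ] using h _ ha 1
  intro y hy
  induction hy using Submodule.span_induction with
  | mem y hy =>
    obtain ⟨p, hp, rfl⟩ := hy
    intro b
    rw [mul_comm, ← Algebra.smul_def, map_smul, smul_eq_mul]
    exact P.mul_mem_right _ hp
  | zero => simp
  | add y z _ _ hy hz => intro b; simpa [mul_add] using add_mem (hy b) (hz b)
  | smul a y _ hy => intro b; simpa [mul_assoc] using hy (b * a)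

theorem Ideal.isMaximal_comap_of_finiteType {k A B : Type*} [Field k] [CommRing A] [CommRing B]
    [Algebra k A] [Algebra k B] [Algebra A B] [IsScalarTower k A B] [Algebra.FiniteType k B]
    (M : Ideal B) [M.IsMaximal] : (M.comap (algebraMap A B)).IsMaximal := by
  let := Ideal.Quotient.field M
  have : Algebra.FiniteType k (B ⧸ M) :=
    .of_surjective (Ideal.Quotient.mkₐ k M) (Ideal.Quotient.mkₐ_surjective k M)
  have : Module.Finite k (B ⧸ M) := finite_of_finite_type_of_isJacobsonRing k (B ⧸ M)
  have : Algebra.IsIntegral A (B ⧸ M) := .tower_top k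
  have := Ideal.isMaximal_comap_of_isIntegral_of_isMaximal (R := A) (⊥ : Ideal (B ⧸ M))
  rwa [IsScalarTower.algebraMap_eq A B (B ⧸ M), ← Ideal.comap_comap,
    ← RingHom.ker_eq_comap_bot, Ideal.Quotient.algebraMap_eq, Ideal.mk_ker] at this

theorem isMaximal_comap_deltaCore {k R : Type*} [Field k] [CommRing R] [Algebra k R]
    [Algebra.FiniteType k R] {Δ : Set (Derivation k R R)} (M : Ideal R) [M.IsMaximal] :
    ((deltaCore Δ M).comap (algebraMap (deltaCenter Δ) R)).IsMaximal := by
  rw [comap_deltaCore]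
  exact Ideal.isMaximal_comap_of_finiteType (k := k) M

theorem Subalgebra.exists_retraction_of_isField {k R : Type*} [CommRing k] [CommRing R]
    [Algebra k R] (K : Subalgebra k R) (hK : IsField K) :
    ∃ f : R →ₗ[K] K, ∀ c : K, f c = c := by
  let := hK.toField
  obtain ⟨f, hf⟩ := (Algebra.linearMap K R).exists_leftInverse_of_injective
    (LinearMap.ker_eq_bot.2 Subtype.val_injective)
  exact ⟨f, fun c => LinearMap.congr_fun hf c⟩

theorem mem_deltaCenter_of_forall_homogeneous {k R G : Type*} [CommRing k] [CommRing R]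
    [Algebra k R] [AddCommGroup G] {𝒜 : G → Submodule k R}
    {Δ : Submodule k (Derivation k R R)}
    (hΔ : Δ = ⨆ d : G, (homogeneousDerivations 𝒜 d ⊓ Δ))
    {x : R} (h : ∀ d, ∀ δ ∈ homogeneousDerivations 𝒜 d ⊓ Δ, δ x = 0) :
    x ∈ deltaCenter (Δ : Set (Derivation k R R)) := by
  intro δ hδ
  rw [SetLike.mem_coe, hΔ] at hδ
  exact Submodule.iSup_induction _ (motive := fun δ => δ x = 0) hδ h (by simp)
    fun δ₁ δ₂ h₁ h₂ => by simp [h₁, h₂]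

section Graded

variable {k R G : Type*} [CommRing k] [CommRing R] [Algebra k R] [AddCommGroup G]
  [DecidableEq G] {𝒜 : G → Submodule k R} [GradedAlgebra 𝒜]

theorem mem_neg_of_mul_eq_one {u v : R} {g : G} (hu : u ∈ 𝒜 g) (huv : u * v = 1) :
    v ∈ 𝒜 (-g) := by
  have h : u * decompose 𝒜 v (-g) = 1 := by
    rw [← coe_decompose_mul_add_of_left_mem 𝒜 hu, huv, add_neg_cancel,
      decompose_of_mem_same 𝒜 (SetLike.one_mem_graded 𝒜)]
  have hv : v = decompose 𝒜 v (-g) :=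
    calc v = v * (u * decompose 𝒜 v (-g)) := by rw [h, mul_one]
      _ = decompose 𝒜 v (-g) := by rw [← mul_assoc, mul_comm v u, huv, one_mul]
  exact hv ▸ SetLike.coe_mem _

theorem IsGradedField.exists_mul_eq_one (hgf : IsGradedField 𝒜) {x : R} {g : G}
    (hx : x ∈ 𝒜 g) (hx0 : x ≠ 0) : ∃ y ∈ 𝒜 (-g), x * y = 1 := by
  obtain ⟨y, hy⟩ := isUnit_iff_exists_inv.1 (hgf.2 g x hx hx0)
  exact ⟨y, mem_neg_of_mul_eq_one hx hy, hy⟩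

variable (𝒜) in
theorem exists_decompose_ne_zero {x : R} (hx : x ≠ 0) :
    ∃ g, (decompose 𝒜 x g : R) ≠ 0 := by
  by_contra! h
  exact hx ((decompose 𝒜).injective (by ext g; simp [h g]))

variable {δ : Derivation k R R} {d : G}

theorem decompose_derivation (hδ : δ ∈ homogeneousDerivations 𝒜 d) (x : R) (g : G) :
    δ (decompose 𝒜 x g) = decompose 𝒜 (δ x) (g + d) := by
  induction x using DirectSum.Decomposition.inductionOn 𝒜 with
  | zero => simp
  | @homogeneous i y =>
    obtain rfl | h := eq_or_ne i g
    · rw [decompose_of_mem_same 𝒜 y.2, decompose_of_mem_same 𝒜 (hδ _ _ y.2)]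
    · rw [decompose_of_mem_ne 𝒜 y.2 h, map_zero,
        decompose_of_mem_ne 𝒜 (hδ _ _ y.2) (by simpa using h)]
  | add x y hx hy => simp [decompose_add, hx, hy]

variable {S : Finset G} {x : R}

theorem decompose_derivation_eq_zero (hδ : δ ∈ homogeneousDerivations 𝒜 d)
    (hx : ∀ g ∉ S, (decompose 𝒜 x g : R) = 0) (hx0 : δ (decompose 𝒜 x 0) = 0) :
    ∀ h ∉ (S.erase 0).image (· + d), (decompose 𝒜 (δ x) h : R) = 0 := by
  intro h hh
  rw [← sub_add_cancel h d, ← decompose_derivation hδ]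
  by_cases h0 : h - d = 0
  · rw [h0, hx0]
  by_cases hS : h - d ∈ S
  · exact (hh (Finset.mem_image.2
      ⟨h - d, Finset.mem_erase.2 ⟨h0, hS⟩, sub_add_cancel h d⟩)).elim
  · rw [hx _ hS, map_zero]

theorem exists_sub_mul_derivation_eq_zero (hgf : IsGradedField 𝒜)
    (hδ : δ ∈ homogeneousDerivations 𝒜 d) (hx : ∀ g ∉ S, (decompose 𝒜 x g : R) = 0)
    (hx1 : (decompose 𝒜 x 0 : R) = 1) (hδx : δ x ≠ 0) :
    ∃ g ∈ S, ∃ c : R, ∀ j ∉ S.erase g, (decompose 𝒜 (x - c * δ x) j : R) = 0 := by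
  have ht := decompose_derivation_eq_zero hδ hx (by rw [hx1, δ.map_one_eq_zero])
  obtain ⟨h, hh⟩ := exists_decompose_ne_zero 𝒜 hδx
  obtain ⟨g, hg, rfl⟩ := Finset.mem_image.1 (by_contra fun hT => hh (ht h hT))
  obtain ⟨w, hw, hw1⟩ := hgf.exists_mul_eq_one (SetLike.coe_mem _) hh
  set c := (decompose 𝒜 x g : R) * w
  have hc : c ∈ 𝒜 (-d) := by
    simpa using SetLike.mul_mem_graded (SetLike.coe_mem (decompose 𝒜 x g)) hw
  refine ⟨g, Finset.mem_of_mem_erase hg, c, fun j hj => ?_⟩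
  have hct : (decompose 𝒜 (c * δ x) j : R) = c * decompose 𝒜 (δ x) (d + j) := by
    have := coe_decompose_mul_add_of_left_mem 𝒜 (b := δ x) (j := d + j) hc
    rwa [neg_add_cancel_left] at this
  rw [decompose_sub, DirectSum.sub_apply, Submodule.coe_sub, hct]
  obtain rfl | hjg := eq_or_ne j g
  · rw [add_comm d, mul_assoc, mul_comm w, hw1, mul_one, sub_self]
  · have hjS : j ∉ S := fun h => hj (Finset.mem_erase.2 ⟨hjg, h⟩)
    rw [hx j hjS, ht (d + j) (by simpa [add_comm d] using fun _ => hjS), mul_zero, sub_zero]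

theorem IsGradedField.exists_mul_decompose_zero_eq_one (hgf : IsGradedField 𝒜) (hx0 : x ≠ 0)
    (hx : ∀ g ∉ S, (decompose 𝒜 x g : R) = 0) :
    ∃ u v : R, u * v = 1 ∧ (decompose 𝒜 (v * x) 0 : R) = 1 ∧
      ∃ S' : Finset G, S'.card ≤ S.card ∧
        ∀ j ∉ S', (decompose 𝒜 (v * x) j : R) = 0 := by
  obtain ⟨g, hg⟩ := exists_decompose_ne_zero 𝒜 hx0
  obtain ⟨v, hv, hgv⟩ := hgf.exists_mul_eq_one (SetLike.coe_mem _) hg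
  have hvx (j : G) : (decompose 𝒜 (v * x) j : R) = v * decompose 𝒜 x (g + j) := by
    have := coe_decompose_mul_add_of_left_mem 𝒜 (b := x) (j := g + j) hv
    rwa [neg_add_cancel_left] at this
  refine ⟨_, v, hgv, by rw [hvx, add_zero, mul_comm, hgv], S.image (-g + ·),
    Finset.card_image_le, fun j hj => ?_⟩
  rw [hvx, hx _ fun h => hj (Finset.mem_image.2 ⟨g + j, h, neg_add_cancel_left g j⟩), mul_zero]

end Graded

section GradedRetraction

variable {k R G : Type*} [CommRing k] [CommRing R] [Algebra k R] [AddCommGroup G]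
  [DecidableEq G] {𝒜 : G → Submodule k R} [GradedAlgebra 𝒜] {Z : Subalgebra k R}

theorem exists_addMonoidHom_eq_on_homogeneous {M : Type*} [AddCommMonoid M] (φ : G → R →+ M) :
    ∃ π : R →+ M, ∀ g, ∀ y ∈ 𝒜 g, π y = φ g y :=
  ⟨(toAddMonoid fun g => (φ g).comp (𝒜 g).subtype.toAddMonoidHom).comp
      (decomposeAddEquiv 𝒜).toAddMonoidHom,
    fun g y hy => by simp [decompose_of_mem 𝒜 hy]⟩

theorem isField_inf_gradeZero [Nontrivial R]
    (hinv : ∀ g, ∀ z ∈ Z, z ∈ 𝒜 g → z ≠ 0 → ∃ w ∈ Z, z * w = 1) :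
    IsField ↥(Z ⊓ SetLike.GradeZero.subalgebra 𝒜) where
  exists_pair_ne := ⟨0, 1, fun h => zero_ne_one (congrArg Subtype.val h)⟩
  mul_comm := mul_comm
  mul_inv_cancel {c} hc := by
    obtain ⟨hcZ, hc0⟩ := Algebra.mem_inf.1 c.2
    obtain ⟨w, hwZ, hcw⟩ := hinv 0 c hcZ hc0 fun h => hc (Subtype.ext h)
    have hw0 : w ∈ 𝒜 0 := by simpa using mem_neg_of_mul_eq_one hc0 hcw
    exact ⟨⟨w, Algebra.mem_inf.2 ⟨hwZ, hw0⟩⟩, Subtype.ext hcw⟩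

theorem exists_mul_eq_one_or_forall_eq_zero
    (hinv : ∀ g, ∀ z ∈ Z, z ∈ 𝒜 g → z ≠ 0 → ∃ w ∈ Z, z * w = 1) (g : G) :
    ∃ u ∈ Z, u ∈ 𝒜 g ∧
      ∃ v ∈ Z, v ∈ 𝒜 (-g) ∧ (u * v = 1 ∨ ∀ z ∈ Z, z ∈ 𝒜 g → z = 0) := by
  by_cases h : ∃ z ∈ Z, z ∈ 𝒜 g ∧ z ≠ 0
  · obtain ⟨u, huZ, hu, hu0⟩ := h
    obtain ⟨v, hvZ, huv⟩ := hinv g u huZ hu hu0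
    exact ⟨u, huZ, hu, v, hvZ, mem_neg_of_mul_eq_one hu huv, .inl huv⟩
  · push Not at h
    exact ⟨0, Z.zero_mem, zero_mem _, 0, Z.zero_mem, zero_mem _, .inr h⟩

/- `φ g y = u g * f (y * v g)`, where `f` is a linear retraction onto the field `Z ∩ R₀` and
`u g`, `v g` are mutually inverse elements of `Z` of degrees `g`, `-g` (both `0` if
`Z ∩ R_g = 0`). Linearity in `w` holds because `w * u h * v (e + h) ∈ Z ∩ R₀` is a scalar
for `f`. -/
theorem exists_degreewise_retraction [Nontrivial R]
    (hinv : ∀ g, ∀ z ∈ Z, z ∈ 𝒜 g → z ≠ 0 → ∃ w ∈ Z, z * w = 1) :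
    ∃ φ : G → R →+ R, (∀ g y, φ g y ∈ Z) ∧ φ 0 1 = 1 ∧
      ∀ {e h : G} {w : R}, w ∈ Z → w ∈ 𝒜 e →
        ∀ y, φ (e + h) (w * y) = w * φ h y := by
  obtain ⟨f, hf⟩ := (Z ⊓ SetLike.GradeZero.subalgebra 𝒜).exists_retraction_of_isField
    (isField_inf_gradeZero hinv)
  have hfmul {c : R} (hcZ : c ∈ Z) (hc : c ∈ 𝒜 0) (y : R) : (f (c * y) : R) = c * f y :=
    congrArg Subtype.val (f.map_smul ⟨c, Algebra.mem_inf.2 ⟨hcZ, hc⟩⟩ y)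
  choose u huZ hu v hvZ hv huv using exists_mul_eq_one_or_forall_eq_zero hinv
  refine ⟨fun g => AddMonoidHom.mk' (fun y => u g * f (y * v g))
      fun a b => by simp [add_mul, mul_add],
    fun g y => Z.mul_mem (huZ g) (Algebra.mem_inf.1 (f _).2).1, ?_, ?_⟩
  · have huv0 := (huv 0).resolve_right fun H =>
      one_ne_zero (H 1 Z.one_mem (SetLike.one_mem_graded 𝒜))
    have hv0 : v 0 ∈ 𝒜 0 := by simpa using hv 0
    have hfv : (f (v 0) : R) = v 0 :=
      congrArg Subtype.val (hf ⟨v 0, Algebra.mem_inf.2 ⟨hvZ 0, hv0⟩⟩)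
    simpa [hfv] using huv0
  intro e h w hwZ hw y
  show u (e + h) * f (w * y * v (e + h)) = w * (u h * f (y * v h))
  by_cases hw0 : w = 0
  · simp [hw0]
  obtain ⟨w', hw'Z, hww'⟩ := hinv e w hwZ hw hw0
  rcases huv h with huvh | hzero
  · have huv' : u (e + h) * v (e + h) = 1 := (huv (e + h)).resolve_right fun H => by
      have h0 := H _ (Z.mul_mem hwZ (huZ h)) (SetLike.mul_mem_graded hw (hu h))
      exact one_ne_zero (by linear_combination (w' * v h) * h0 - (u h * v h) * hww' - huvh)
    have hc : w * u h * v (e + h) ∈ 𝒜 0 := by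
      simpa using SetLike.mul_mem_graded (SetLike.mul_mem_graded hw (hu h)) (hv (e + h))
    calc u (e + h) * f (w * y * v (e + h))
        = u (e + h) * f (w * u h * v (e + h) * (y * v h)) := by
          congr 3; linear_combination (-(w * y * v (e + h))) * huvh
      _ = u (e + h) * (w * u h * v (e + h) * f (y * v h)) := by
          rw [hfmul (Z.mul_mem (Z.mul_mem hwZ (huZ h)) (hvZ _)) hc]
      _ = w * (u h * f (y * v h)) := by
          linear_combination (w * u h * f (y * v h)) * huv'
  · have hw' : w' ∈ 𝒜 (-e) := mem_neg_of_mul_eq_one hw hww'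
    have h1 : w' * u (e + h) = 0 :=
      hzero _ (Z.mul_mem hw'Z (huZ _)) (by simpa using SetLike.mul_mem_graded hw' (hu (e + h)))
    have h2 : u (e + h) = 0 := by linear_combination -(u (e + h)) * hww' + w * h1
    simp [h2, hzero _ (huZ h) (hu h)]

theorem exists_retraction_of_isHomogeneous [Nontrivial R]
    (hinv : ∀ g, ∀ z ∈ Z, z ∈ 𝒜 g → z ≠ 0 → ∃ w ∈ Z, z * w = 1)
    (hZ : ∀ z ∈ Z, ∀ g, (decompose 𝒜 z g : R) ∈ Z) :
    ∃ ρ : R →ₗ[Z] Z, ∀ z : Z, ρ z = z := by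
  classical
  obtain ⟨φ, hφZ, hφ1, hφmul⟩ := exists_degreewise_retraction hinv
  obtain ⟨π, hπ⟩ := exists_addMonoidHom_eq_on_homogeneous (𝒜 := 𝒜) φ
  have hπZ (x : R) : π x ∈ Z := by
    induction x using DirectSum.Decomposition.inductionOn 𝒜 with
    | zero => simp
    | homogeneous y => rw [hπ _ _ y.2]; exact hφZ _ _
    | add a b ha hb => rw [map_add]; exact Z.add_mem ha hb
  have hπmul {w : R} (hwZ : w ∈ Z) (x : R) : π (w * x) = w * π x := by
    induction x using DirectSum.Decomposition.inductionOn 𝒜 with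
    | zero => simp
    | homogeneous y =>
      rw [← sum_support_decompose 𝒜 w, Finset.sum_mul, map_sum, Finset.sum_mul]
      refine Finset.sum_congr rfl fun e _ => ?_
      rw [hπ _ _ (SetLike.mul_mem_graded (SetLike.coe_mem _) y.2), hπ _ _ y.2,
        hφmul (hZ w hwZ e) (SetLike.coe_mem _)]
    | add a b ha hb => rw [mul_add, map_add, map_add, ha, hb, mul_add]
  refine ⟨{ toFun := fun x => ⟨π x, hπZ x⟩
            map_add' := fun x y => Subtype.ext (map_add π x y)
            map_smul' := fun z x => Subtype.ext (hπmul z.2 x) }, fun z => Subtype.ext ?_⟩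
  simpa [hπ 0 1 (SetLike.one_mem_graded 𝒜), hφ1] using hπmul z.2 1

end GradedRetraction

section GradedCenter

variable {k R G : Type*} [CommRing k] [CommRing R] [Algebra k R] [AddCommGroup G]
  [DecidableEq G] {𝒜 : G → Submodule k R} [GradedAlgebra 𝒜]
  {Δ : Submodule k (Derivation k R R)}

theorem decompose_mem_deltaCenter (hΔ : Δ = ⨆ d : G, (homogeneousDerivations 𝒜 d ⊓ Δ))
    {x : R} (hx : x ∈ deltaCenter (Δ : Set (Derivation k R R))) (g : G) :
    (decompose 𝒜 x g : R) ∈ deltaCenter (Δ : Set (Derivation k R R)) :=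
  mem_deltaCenter_of_forall_homogeneous hΔ fun d δ hδ => by
    rw [decompose_derivation hδ.1, hx δ hδ.2, decompose_zero, DirectSum.zero_apply,
      ZeroMemClass.coe_zero]

/- After rescaling `x` so that its degree-zero component is `1`, a homogeneous `δ ∈ Δ` with
`δ x ≠ 0` yields two elements of `I` with smaller support: `δ x`, which loses degree `0`,
and `x - c * δ x`, which loses the degree eliminated by `exists_sub_mul_derivation_eq_zero`. -/
theorem IsDeltaIdeal.map_comap_deltaCenter
    (hΔ : Δ = ⨆ d : G, (homogeneousDerivations 𝒜 d ⊓ Δ)) (hgf : IsGradedField 𝒜)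
    {I : Ideal R} (hI : IsDeltaIdeal (Δ : Set (Derivation k R R)) I) :
    (I.comap (algebraMap (deltaCenter (Δ : Set (Derivation k R R))) R)).map
      (algebraMap _ R) = I := by
  classical
  have := hgf.1
  refine le_antisymm Ideal.map_comap_le ?_
  set J := (I.comap (algebraMap (deltaCenter (Δ : Set (Derivation k R R))) R)).map (algebraMap _ R)
  suffices key : ∀ n (S : Finset G), S.card ≤ n →
      ∀ x ∈ I, (∀ g ∉ S, (decompose 𝒜 x g : R) = 0) → x ∈ J from
    fun x hx => key _ (decompose 𝒜 x).support le_rfl x hx fun g hg => by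
      simp [DFinsupp.notMem_support_iff.1 hg]
  intro n
  induction n with
  | zero =>
    intro S hS x _ hx
    obtain rfl : x = 0 := by
      by_contra hx0
      obtain ⟨g, hg⟩ := exists_decompose_ne_zero 𝒜 hx0
      exact hg (hx g (by simp [Finset.card_eq_zero.1 (Nat.le_zero.1 hS)]))
    exact J.zero_mem
  | succ n ih =>
    intro S hS x hxI hx
    obtain rfl | hx0 := eq_or_ne x 0
    · exact J.zero_mem
    obtain ⟨u, v, huv, hy1, S', hS', hy⟩ := hgf.exists_mul_decompose_zero_eq_one hx0 hx
    suffices hyJ : v * x ∈ J by simpa [← mul_assoc, huv] using J.mul_mem_left u hyJ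
    have hyI : v * x ∈ I := I.mul_mem_left v hxI
    by_cases hyZ : v * x ∈ deltaCenter (Δ : Set (Derivation k R R))
    · exact Ideal.subset_span ⟨⟨v * x, hyZ⟩, hyI, rfl⟩
    obtain ⟨d, δ, ⟨hδ, hδΔ⟩, hδy⟩ :
        ∃ d, ∃ δ ∈ homogeneousDerivations 𝒜 d ⊓ Δ, δ (v * x) ≠ 0 := by
      by_contra! h
      exact hyZ (mem_deltaCenter_of_forall_homogeneous hΔ h)
    have h0 : (0 : G) ∈ S' := by_contra fun h => one_ne_zero (hy1 ▸ hy 0 h)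
    have hcard : (S'.erase 0).card ≤ n := by rw [Finset.card_erase_of_mem h0]; omega
    have hδyJ : δ (v * x) ∈ J := ih _ (Finset.card_image_le.trans hcard) _ (hI δ hδΔ _ hyI)
      (decompose_derivation_eq_zero hδ hy (by rw [hy1, δ.map_one_eq_zero]))
    obtain ⟨g, hg, c, hc⟩ := exists_sub_mul_derivation_eq_zero hgf hδ hy hy1 hδy
    have hrestJ : v * x - c * δ (v * x) ∈ J :=
      ih _ (by rw [Finset.card_erase_of_mem hg]; omega) _
        (sub_mem hyI (I.mul_mem_left c (hI δ hδΔ _ hyI))) hc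
    simpa using add_mem hrestJ (J.mul_mem_left c hδyJ)

theorem comap_map_deltaCenter (hΔ : Δ = ⨆ d : G, (homogeneousDerivations 𝒜 d ⊓ Δ))
    (hgf : IsGradedField 𝒜) (P : Ideal (deltaCenter (Δ : Set (Derivation k R R)))) :
    (P.map (algebraMap _ R)).comap (algebraMap _ R) = P := by
  have := hgf.1
  obtain ⟨ρ, hρ⟩ := exists_retraction_of_isHomogeneous (𝒜 := 𝒜)
    (fun g z hz hzg hz0 => by
      obtain ⟨w, -, hzw⟩ := hgf.exists_mul_eq_one hzg hz0
      exact ⟨w, mem_deltaCenter_of_mul_eq_one hz hzw, hzw⟩)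
    fun z hz => decompose_mem_deltaCenter hΔ hz
  exact Ideal.comap_map_eq_self_of_retraction ρ hρ P

theorem isDeltaPrime_map_of_isPrime (hΔ : Δ = ⨆ d : G, (homogeneousDerivations 𝒜 d ⊓ Δ))
    (hgf : IsGradedField 𝒜) {P : Ideal (deltaCenter (Δ : Set (Derivation k R R)))}
    (hP : P.IsPrime) : IsDeltaPrime (Δ : Set (Derivation k R R)) (P.map (algebraMap _ R)) := by
  have hcomap := comap_map_deltaCenter hΔ hgf P
  refine ⟨fun h => hP.ne_top (by rw [← hcomap, h, Ideal.comap_top]),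
    isDeltaIdeal_map_deltaCenter P, fun I J hI hJ hIJ => ?_⟩
  have hle : I.comap (algebraMap _ R) * J.comap (algebraMap _ R) ≤ P :=
    hcomap ▸ Ideal.mul_le.2 fun a ha b hb => by simpa using hIJ (Ideal.mul_mem_mul ha hb)
  refine (hP.mul_le.1 hle).imp (fun h => ?_) (fun h => ?_)
  · exact hI.map_comap_deltaCenter hΔ hgf ▸ Ideal.map_mono h
  · exact hJ.map_comap_deltaCenter hΔ hgf ▸ Ideal.map_mono h

theorem exists_comap_le_iff_le_map (hΔ : Δ = ⨆ d : G, (homogeneousDerivations 𝒜 d ⊓ Δ))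
    (hgf : IsGradedField 𝒜) (I : Ideal R) :
    ∃ I' : Ideal (deltaCenter (Δ : Set (Derivation k R R))),
      ∀ P, I ≤ P.map (algebraMap _ R) ↔ I' ≤ P := by
  set T := sInf {T : Ideal R | I ≤ T ∧ IsDeltaIdeal (Δ : Set (Derivation k R R)) T}
  have hT : IsDeltaIdeal (Δ : Set (Derivation k R R)) T := isDeltaIdeal_sInf fun _ h => h.2
  refine ⟨T.comap (algebraMap _ R), fun P => ⟨fun h => ?_, fun h => ?_⟩⟩
  · rw [← comap_map_deltaCenter hΔ hgf P]
    exact Ideal.comap_mono (sInf_le ⟨h, isDeltaIdeal_map_deltaCenter P⟩)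
  · calc I ≤ T := le_sInf fun _ h => h.1
      _ = (T.comap (algebraMap _ R)).map (algebraMap _ R) :=
        (hT.map_comap_deltaCenter hΔ hgf).symm
      _ ≤ P.map (algebraMap _ R) := Ideal.map_mono h

theorem deltaCore_eq_map_comap (hΔ : Δ = ⨆ d : G, (homogeneousDerivations 𝒜 d ⊓ Δ))
    (hgf : IsGradedField 𝒜) (M : Ideal R) :
    deltaCore (Δ : Set (Derivation k R R)) M =
      (M.comap (algebraMap (deltaCenter (Δ : Set (Derivation k R R))) R)).map
        (algebraMap _ R) := by
  rw [← comap_deltaCore, (isDeltaIdeal_deltaCore M).map_comap_deltaCenter hΔ hgf]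

theorem isDeltaPrimitive_map_of_isMaximal
    (hΔ : Δ = ⨆ d : G, (homogeneousDerivations 𝒜 d ⊓ Δ)) (hgf : IsGradedField 𝒜)
    {N : Ideal (deltaCenter (Δ : Set (Derivation k R R)))} (hN : N.IsMaximal) :
    IsDeltaPrimitive (Δ : Set (Derivation k R R)) (N.map (algebraMap _ R)) := by
  have hcomap := comap_map_deltaCenter hΔ hgf N
  obtain ⟨M, hM, hNM⟩ := Ideal.exists_le_maximal (N.map (algebraMap _ R))
    fun h => hN.ne_top (by rw [← hcomap, h, Ideal.comap_top])
  have hMN : M.comap (algebraMap _ R) = N :=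
    (hN.eq_of_le (Ideal.comap_ne_top _ hM.ne_top) (hcomap ▸ Ideal.comap_mono hNM)).symm
  exact ⟨M, hM, by rw [deltaCore_eq_map_comap hΔ hgf, hMN]⟩

end GradedCenter

theorem deltaSpec_homeomorphic_spec_center_general
    {k R G : Type*} [Field k] [CommRing R] [Algebra k R]
    [AddCommGroup G] [DecidableEq G]
    (𝒜 : G → Submodule k R) [GradedAlgebra 𝒜]
    (Δ : Submodule k (Derivation k R R))
    (hΔ : Δ = ⨆ d : G, (homogeneousDerivations 𝒜 d ⊓ Δ))
    (hgf : IsGradedField 𝒜) :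
    -- contraction maps Δ-spec R to spec Z_Δ(R) and extension is a two-sided inverse
    (∀ Q : Ideal R, IsDeltaPrime (Δ : Set (Derivation k R R)) Q →
      (Ideal.comap (deltaCenter (Δ : Set (Derivation k R R))).val.toRingHom Q).IsPrime ∧
      Ideal.span (Subtype.val ''
        ((Ideal.comap (deltaCenter (Δ : Set (Derivation k R R))).val.toRingHom Q) :
          Set (deltaCenter (Δ : Set (Derivation k R R))))) = Q) ∧
    -- extension maps spec Z_Δ(R) to Δ-spec R and contraction is a two-sided inverse
    (∀ P : Ideal (deltaCenter (Δ : Set (Derivation k R R))), P.IsPrime →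
      IsDeltaPrime (Δ : Set (Derivation k R R))
        (Ideal.span (Subtype.val ''
          (P : Set (deltaCenter (Δ : Set (Derivation k R R)))))) ∧
      Ideal.comap (deltaCenter (Δ : Set (Derivation k R R))).val.toRingHom
        (Ideal.span (Subtype.val ''
          (P : Set (deltaCenter (Δ : Set (Derivation k R R)))))) = P) ∧
    -- contraction is continuous: preimages of Zariski-closed sets are Zariski-closed
    (∀ I' : Ideal (deltaCenter (Δ : Set (Derivation k R R))), ∃ I : Ideal R,
      ∀ Q : Ideal R, IsDeltaPrime (Δ : Set (Derivation k R R)) Q →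
        (I' ≤ Ideal.comap (deltaCenter (Δ : Set (Derivation k R R))).val.toRingHom Q ↔
          I ≤ Q)) ∧
    -- extension is continuous: preimages of Zariski-closed sets are Zariski-closed
    (∀ I : Ideal R, ∃ I' : Ideal (deltaCenter (Δ : Set (Derivation k R R))),
      ∀ P : Ideal (deltaCenter (Δ : Set (Derivation k R R))), P.IsPrime →
        (I ≤ Ideal.span (Subtype.val ''
            (P : Set (deltaCenter (Δ : Set (Derivation k R R))))) ↔ I' ≤ P)) ∧
    -- if R is affine over k, the maps restrict to a correspondence between
    -- Δ-prim R and max Z_Δ(R)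
    (Algebra.FiniteType k R →
      (∀ Q : Ideal R, IsDeltaPrimitive (Δ : Set (Derivation k R R)) Q →
        (Ideal.comap (deltaCenter (Δ : Set (Derivation k R R))).val.toRingHom Q).IsMaximal) ∧
      (∀ N : Ideal (deltaCenter (Δ : Set (Derivation k R R))), N.IsMaximal →
        IsDeltaPrimitive (Δ : Set (Derivation k R R))
          (Ideal.span (Subtype.val ''
            (N : Set (deltaCenter (Δ : Set (Derivation k R R)))))))) := by
  refine ⟨fun Q hQ =>
      ⟨isPrime_comap_of_isDeltaPrime hQ, IsDeltaIdeal.map_comap_deltaCenter hΔ hgf hQ.2.1⟩,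
    fun P hP => ⟨isDeltaPrime_map_of_isPrime hΔ hgf hP, comap_map_deltaCenter hΔ hgf P⟩,
    fun I' => ⟨I'.map (algebraMap _ R), fun Q _ => Ideal.map_le_iff_le_comap.symm⟩,
    fun I => (exists_comap_le_iff_le_map hΔ hgf I).imp fun _ h P _ => h P,
    fun _ => ⟨?_, fun N hN => isDeltaPrimitive_map_of_isMaximal hΔ hgf hN⟩⟩
  rintro Q ⟨M, hM, rfl⟩
  exact isMaximal_comap_deltaCore M

/-- Let `(R,Δ)` be a commutative `G`-graded differential `k`-algebra
with `R` a graded field.  Then contraction `Q ↦ Q ∩ Z_Δ(R)` and extension `P ↦ RP` are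
mutually inverse homeomorphisms between `Δ-spec R` and `spec Z_Δ(R)` (the Zariski-closed
subsets correspond), and if moreover `R` is an affine `k`-algebra they restrict to
mutually inverse homeomorphisms between `Δ-prim R` and `max Z_Δ(R)`. -/
theorem deltaSpec_homeomorphic_spec_center
    {k R G : Type*} [Field k] [CharZero k] [CommRing R] [Algebra k R]
    [AddCommGroup G] [DecidableEq G]
    (𝒜 : G → Submodule k R) [GradedAlgebra 𝒜]
    (Δ : Submodule k (Derivation k R R))
    (hΔ : Δ = ⨆ d : G, (homogeneousDerivations 𝒜 d ⊓ Δ))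
    (hgf : IsGradedField 𝒜) :
    -- contraction maps Δ-spec R to spec Z_Δ(R) and extension is a two-sided inverse
    (∀ Q : Ideal R, IsDeltaPrime (Δ : Set (Derivation k R R)) Q →
      (Ideal.comap (deltaCenter (Δ : Set (Derivation k R R))).val.toRingHom Q).IsPrime ∧
      Ideal.span (Subtype.val ''
        ((Ideal.comap (deltaCenter (Δ : Set (Derivation k R R))).val.toRingHom Q) :
          Set (deltaCenter (Δ : Set (Derivation k R R))))) = Q) ∧
    -- extension maps spec Z_Δ(R) to Δ-spec R and contraction is a two-sided inverse
    (∀ P : Ideal (deltaCenter (Δ : Set (Derivation k R R))), P.IsPrime →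
      IsDeltaPrime (Δ : Set (Derivation k R R))
        (Ideal.span (Subtype.val ''
          (P : Set (deltaCenter (Δ : Set (Derivation k R R)))))) ∧
      Ideal.comap (deltaCenter (Δ : Set (Derivation k R R))).val.toRingHom
        (Ideal.span (Subtype.val ''
          (P : Set (deltaCenter (Δ : Set (Derivation k R R)))))) = P) ∧
    -- contraction is continuous: preimages of Zariski-closed sets are Zariski-closed
    (∀ I' : Ideal (deltaCenter (Δ : Set (Derivation k R R))), ∃ I : Ideal R,
      ∀ Q : Ideal R, IsDeltaPrime (Δ : Set (Derivation k R R)) Q →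
        (I' ≤ Ideal.comap (deltaCenter (Δ : Set (Derivation k R R))).val.toRingHom Q ↔
          I ≤ Q)) ∧
    -- extension is continuous: preimages of Zariski-closed sets are Zariski-closed
    (∀ I : Ideal R, ∃ I' : Ideal (deltaCenter (Δ : Set (Derivation k R R))),
      ∀ P : Ideal (deltaCenter (Δ : Set (Derivation k R R))), P.IsPrime →
        (I ≤ Ideal.span (Subtype.val ''
            (P : Set (deltaCenter (Δ : Set (Derivation k R R))))) ↔ I' ≤ P)) ∧
    -- if R is affine over k, the maps restrict to a correspondence between
    -- Δ-prim R and max Z_Δ(R)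
    (Algebra.FiniteType k R →
      (∀ Q : Ideal R, IsDeltaPrimitive (Δ : Set (Derivation k R R)) Q →
        (Ideal.comap (deltaCenter (Δ : Set (Derivation k R R))).val.toRingHom Q).IsMaximal) ∧
      (∀ N : Ideal (deltaCenter (Δ : Set (Derivation k R R))), N.IsMaximal →
        IsDeltaPrimitive (Δ : Set (Derivation k R R))
          (Ideal.span (Subtype.val ''
            (N : Set (deltaCenter (Δ : Set (Derivation k R R)))))))) :=
  deltaSpec_homeomorphic_spec_center_general 𝒜 Δ hΔ hgf
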